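/- arXiv:1612.03793 — 4 statements merged into one kernel-verified Lean document; each statement's English description precedes it below -/
import Mathlib

section
/- Let S_k, k = 1, 2, ..., be the Sylvester matrices of a polynomial matrix M(λ) ∈ F[λ]^{m×(m+n)} of degree at most d. If S_k has full row rank (k+d)m for some index k ≥ 1, then for every index ℓ > k the Sylvester matrix S_ℓ also has full row rank (ℓ+d)m. -/
/-!
`S_{k+1}` contains `S_k` twice: in its last `k` block columns shifted down by one block row
(its top block row vanishes there), and in its first `k` block columns (its bottom block row
vanishes there). So a left null vector of `S_{k+1}` restricts to left null vectors of `S_k` on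
block rows `1, …, k+d` and on block rows `0, …, k+d-1`. These cover all block rows once
`k + d ≥ 1`, so full row rank of `S_k` passes to `S_{k+1}`, and induction on `ℓ` finishes.
-/

open Polynomial Matrix

noncomputable section

variable {F : Type*} [Field F]

/-- The rows of a polynomial matrix, viewed as vectors of rational functions. -/
def ratRow {p q : ℕ} (M : Matrix (Fin p) (Fin q) F[X]) (i : Fin p) :
    Fin q → RatFunc F :=
  fun j => algebraMap F[X] (RatFunc F) (M i j)

/-- The rational vector subspace spanned by the rows of a polynomial matrix. -/
def rowSpan {p q : ℕ} (M : Matrix (Fin p) (Fin q) F[X]) :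
    Submodule (RatFunc F) (Fin q → RatFunc F) :=
  Submodule.span (RatFunc F) (Set.range (ratRow M))

/-- The degree of the `i`-th row of a polynomial matrix. -/
def rowDeg {p q : ℕ} (M : Matrix (Fin p) (Fin q) F[X]) (i : Fin p) : ℕ :=
  Finset.univ.sup fun j => (M i j).natDegree

/-- The rows of `M` form a polynomial basis of the rational subspace `V` whose sum of
row degrees is minimal among all polynomial bases of `V`. -/
def IsMinimalBasisOf {p q : ℕ} (V : Submodule (RatFunc F) (Fin q → RatFunc F))
    (M : Matrix (Fin p) (Fin q) F[X]) : Prop :=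
  LinearIndependent (RatFunc F) (ratRow M) ∧ rowSpan M = V ∧
    ∀ M' : Matrix (Fin p) (Fin q) F[X],
      LinearIndependent (RatFunc F) (ratRow M') → rowSpan M' = V →
        ∑ i, rowDeg M i ≤ ∑ i, rowDeg M' i

/-- A polynomial matrix is a minimal basis if its rows form a minimal basis of the
rational subspace they span. -/
def IsMinimalBasis {p q : ℕ} (M : Matrix (Fin p) (Fin q) F[X]) : Prop :=
  IsMinimalBasisOf (rowSpan M) M

/-- A polynomial matrix viewed as a matrix of rational functions. -/
def ratMat {p q : ℕ} (M : Matrix (Fin p) (Fin q) F[X]) :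
    Matrix (Fin p) (Fin q) (RatFunc F) :=
  M.map (algebraMap F[X] (RatFunc F))

/-- The right null-space over `F(λ)` of a polynomial matrix. -/
def rightNullSpace {p q : ℕ} (M : Matrix (Fin p) (Fin q) F[X]) :
    Submodule (RatFunc F) (Fin q → RatFunc F) :=
  LinearMap.ker (Matrix.mulVecLin (ratMat M))

/-- The `k`-th Sylvester matrix of a polynomial matrix regarded as having degree at
most `e`: the block-Toeplitz matrix with `k` block columns whose `j`-th block column
carries the coefficients `M_0, …, M_e` in block rows `j, …, j+e` and zeros elsewhere. -/
def sylv {p q : ℕ} (e k : ℕ) (M : Matrix (Fin p) (Fin q) F[X]) :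
    Matrix (Fin (k + e) × Fin p) (Fin k × Fin q) F :=
  fun r c =>
    if (c.1 : ℕ) ≤ (r.1 : ℕ) ∧ (r.1 : ℕ) ≤ (c.1 : ℕ) + e then
      (M r.2 c.2).coeff ((r.1 : ℕ) - (c.1 : ℕ))
    else 0

/-- `M`, regarded as a polynomial matrix of degree at most `e`, has
full-Sylvester-rank if every Sylvester matrix `S_k`, `k ≥ 1`, has full rank. -/
def HasFullSylvesterRank {p q : ℕ} (e : ℕ) (M : Matrix (Fin p) (Fin q) F[X]) : Prop :=
  ∀ k : ℕ, 1 ≤ k → (sylv e k M).rank = min ((k + e) * p) (k * q)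

/-- The `k`-th coefficient matrix of a polynomial matrix. -/
def coeffMat {p q : ℕ} (k : ℕ) (M : Matrix (Fin p) (Fin q) F[X]) :
    Matrix (Fin p) (Fin q) F :=
  fun i j => (M i j).coeff k

/-- The highest-row-degree coefficient matrix: its `i`-th row is the coefficient of
`λ^{d_i}` in the `i`-th row of `M`, where `d_i` is the `i`-th row degree. -/
def highRowMat {p q : ℕ} (M : Matrix (Fin p) (Fin q) F[X]) :
    Matrix (Fin p) (Fin q) F :=
  fun i j => (M i j).coeff (rowDeg M i)

/-- The `e`-reversal of a polynomial matrix: `rev_e P(λ) = λ^e P(1/λ)`. -/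
def revMat {p q : ℕ} (e : ℕ) (P : Matrix (Fin p) (Fin q) F[X]) :
    Matrix (Fin p) (Fin q) F[X] :=
  fun i j => (P i j).reflect e

namespace Matrix

variable {K R ι ι' κ κ' : Type*}

theorem rank_eq_card_iff_vecMul_eq_zero [Field K] [Fintype ι] [Fintype κ] (A : Matrix ι κ K) :
    A.rank = Fintype.card ι ↔ ∀ u : ι → K, u ᵥ* A = 0 → u = 0 := by
  change _ ↔ ∀ u, vecMulLinear A u = 0 → u = 0
  rw [← injective_iff_map_eq_zero, coe_vecMulLinear, vecMul_injective_iff,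
    linearIndependent_iff_card_eq_finrank_span, rank_eq_finrank_span_row, Set.finrank, eq_comm]

theorem vecMul_comp_eq_of_submatrix_eq [NonUnitalNonAssocSemiring R] [Fintype ι] [Fintype ι']
    {A : Matrix ι κ R} {B : Matrix ι' κ' R} {f : ι' → ι} {g : κ' → κ} (hf : f.Injective)
    (hAB : A.submatrix f g = B) (hA : ∀ r ∉ Set.range f, ∀ c, A r (g c) = 0) (u : ι → R) :
    (u ᵥ* A) ∘ g = (u ∘ f) ᵥ* B := by
  funext c
  subst hAB
  exact (Fintype.sum_of_injective f hf _ _ (fun r hr => by simp [hA r hr]) fun _ => rfl).symm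

end Matrix

section Sylvester

variable {p q : ℕ}

theorem sylv_succ_submatrix_succ (e k : ℕ) (M : Matrix (Fin p) (Fin q) F[X]) :
    (sylv e (k + 1) M).submatrix (Prod.map (fun t : Fin (k + e) => ⟨t + 1, by omega⟩) id)
      (Prod.map Fin.succ id) = sylv e k M := by
  ext ⟨t, i⟩ ⟨s, j⟩
  simp only [sylv, submatrix_apply, Prod.map, id, Fin.val_succ, Nat.add_sub_add_right,
    add_le_add_iff_right, add_right_comm (s : ℕ) 1 e]

theorem sylv_succ_submatrix_castSucc (e k : ℕ) (M : Matrix (Fin p) (Fin q) F[X]) :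
    (sylv e (k + 1) M).submatrix (Prod.map (Fin.castLE (by omega)) id)
      (Prod.map Fin.castSucc id) = sylv e k M := by
  ext ⟨t, i⟩ ⟨s, j⟩
  simp [sylv]

theorem vecMul_sylv_succ_comp_succ (e k : ℕ) (M : Matrix (Fin p) (Fin q) F[X])
    (u : Fin (k + 1 + e) × Fin p → F) :
    (u ᵥ* sylv e (k + 1) M) ∘ Prod.map Fin.succ id
      = (u ∘ Prod.map (fun t : Fin (k + e) => ⟨t + 1, by omega⟩) id) ᵥ* sylv e k M := by
  refine vecMul_comp_eq_of_submatrix_eq ?_ (sylv_succ_submatrix_succ e k M) ?_ u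
  · refine Function.Injective.prodMap (fun t t' h => ?_) Function.injective_id
    simpa [Fin.ext_iff] using h
  · rintro ⟨⟨t, ht⟩, i⟩ hr ⟨s, j⟩
    obtain rfl : t = 0 := by
      by_contra h0
      exact hr ⟨(⟨t - 1, by omega⟩, i), by
        simp only [Prod.map_apply, id_eq, Prod.mk.injEq, Fin.ext_iff, and_true]; omega⟩
    simp [sylv]

theorem vecMul_sylv_succ_comp_castSucc (e k : ℕ) (M : Matrix (Fin p) (Fin q) F[X])
    (u : Fin (k + 1 + e) × Fin p → F) :
    (u ᵥ* sylv e (k + 1) M) ∘ Prod.map Fin.castSucc id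
      = (u ∘ Prod.map (Fin.castLE (by omega)) id) ᵥ* sylv e k M := by
  refine vecMul_comp_eq_of_submatrix_eq ?_ (sylv_succ_submatrix_castSucc e k M) ?_ u
  · exact Function.Injective.prodMap (Fin.castLE_injective _) Function.injective_id
  · rintro ⟨⟨t, ht⟩, i⟩ hr ⟨⟨s, hs⟩, j⟩
    obtain rfl : t = k + e := by
      by_contra h
      exact hr ⟨(⟨t, by omega⟩, i), rfl⟩
    simp only [sylv, Prod.map_apply, Fin.castSucc_mk, id_eq, ite_eq_right_iff]
    omega

theorem eq_zero_of_vecMul_sylv_succ_eq_zero {e k : ℕ} (hke : 0 < k + e)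
    {M : Matrix (Fin p) (Fin q) F[X]} (hM : ∀ u, u ᵥ* sylv e k M = 0 → u = 0) :
    ∀ u, u ᵥ* sylv e (k + 1) M = 0 → u = 0 := by
  intro u hu
  have h_tail := hM _ (by rw [← vecMul_sylv_succ_comp_succ, hu]; rfl)
  have h_init := hM _ (by rw [← vecMul_sylv_succ_comp_castSucc, hu]; rfl)
  funext ⟨⟨t, ht⟩, i⟩
  cases t with
  | zero => exact congrFun h_init (⟨0, hke⟩, i)
  | succ t => exact congrFun h_tail (⟨t, by omega⟩, i)

theorem eq_zero_of_vecMul_sylv_eq_zero_of_le {e k l : ℕ} (hke : 0 < k + e) (hkl : k ≤ l)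
    {M : Matrix (Fin p) (Fin q) F[X]} (hM : ∀ u, u ᵥ* sylv e k M = 0 → u = 0) :
    ∀ u, u ᵥ* sylv e l M = 0 → u = 0 := by
  induction l, hkl using Nat.le_induction with
  | base => exact hM
  | succ l hkl ih => exact eq_zero_of_vecMul_sylv_succ_eq_zero (by omega) ih

end Sylvester

theorem sylvester_full_row_rank_of_le_general {F : Type*} [Field F] {m n d : ℕ}
    (M : Matrix (Fin m) (Fin (m + n)) F[X])
    (k : ℕ) (hk : 1 ≤ k) (hfull : (sylv d k M).rank = (k + d) * m) :
    ∀ ℓ : ℕ, k < ℓ → (sylv d ℓ M).rank = (ℓ + d) * m := by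
  intro ℓ hkℓ
  have hcard (j : ℕ) : Fintype.card (Fin (j + d) × Fin m) = (j + d) * m := by simp
  rw [← hcard, rank_eq_card_iff_vecMul_eq_zero] at hfull ⊢
  exact eq_zero_of_vecMul_sylv_eq_zero_of_le (by omega) hkℓ.le hfull

/-- If a Sylvester matrix `S_k` of `M(λ)` has full row rank `(k+d)m`, then every
Sylvester matrix `S_ℓ` with `ℓ > k` also has full row rank `(ℓ+d)m`. -/
theorem sylvester_full_row_rank_of_le {F : Type*} [Field F] {m n d : ℕ}
    (hm : 0 < m) (hn : 0 < n) (hd : 0 < d)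
    (M : Matrix (Fin m) (Fin (m + n)) F[X]) (hdeg : ∀ i j, (M i j).natDegree ≤ d)
    (k : ℕ) (hk : 1 ≤ k) (hfull : (sylv d k M).rank = (k + d) * m) :
    ∀ ℓ : ℕ, k < ℓ → (sylv d ℓ M).rank = (ℓ + d) * m :=
  sylvester_full_row_rank_of_le_general M k hk hfull

end
end

section
/- Let M(λ) ∈ F[λ]^{m×(m+n)} be a polynomial matrix of degree at most d with full row normal rank m, let S_k be its Sylvester matrices with ranks r_k and right nullities n_k = k(m+n) − r_k, let ε_1, …, ε_n be the right minimal indices of M(λ), and let d' be the maximum right minimal index of M(λ). Then ε_1 + ⋯ + ε_n = n·d' − n_{d'} = r_{d'} − m·d'. -/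
open Polynomial Matrix

noncomputable section

variable {F : Type*} [Field F]

/-!
The kernel of `S_k` consists of the coefficient vectors of the polynomial vectors `x` of
degree `< k` with `M x = 0`. If `N` is a minimal basis of the right null space with row degrees
`ε_i`, each such `x` is uniquely `∑ a_i N_i` with polynomials `a_i` of degree `< k - ε_i`: the
`a_i` are polynomial because `N` has no finite zeros, and their degrees are bounded by the
predictable-degree property, both consequences of the exchange argument behind minimality.
Hence `n_k = ∑ (k - ε_i)₊`, and for `k = d'` rank–nullity gives both identities.
-/

section MinimalBasis

variable {p q : ℕ}

lemma natDegree_le_rowDeg (N : Matrix (Fin p) (Fin q) F[X]) (i : Fin p) (j : Fin q) :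
    (N i j).natDegree ≤ rowDeg N i :=
  Finset.le_sup (f := fun j => (N i j).natDegree) (Finset.mem_univ j)

lemma algebraMap_comp_vecMul (a : Fin p → F[X]) (N : Matrix (Fin p) (Fin q) F[X]) :
    algebraMap F[X] (RatFunc F) ∘ (a ᵥ* N) = (algebraMap F[X] (RatFunc F) ∘ a) ᵥ* ratMat N :=
  funext (RingHom.map_vecMul _ N a)

lemma algebraMap_comp_vecMul_mem_rowSpan (a : Fin p → F[X]) (N : Matrix (Fin p) (Fin q) F[X]) :
    algebraMap F[X] (RatFunc F) ∘ (a ᵥ* N) ∈ rowSpan N := by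
  rw [algebraMap_comp_vecMul, vecMul_eq_sum]
  exact Submodule.sum_mem _ fun i _ => Submodule.smul_mem _ _ (Submodule.subset_span ⟨i, rfl⟩)

lemma mulVec_eq_zero_iff_mem_rightNullSpace {m : ℕ} (M : Matrix (Fin m) (Fin q) F[X])
    (y : Fin q → F[X]) : M *ᵥ y = 0 ↔ algebraMap F[X] (RatFunc F) ∘ y ∈ rightNullSpace M := by
  have hmap : ratMat M *ᵥ (algebraMap F[X] (RatFunc F) ∘ y)
      = algebraMap F[X] (RatFunc F) ∘ (M *ᵥ y) :=
    funext fun i => (RingHom.map_mulVec _ M y i).symm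
  rw [rightNullSpace, LinearMap.mem_ker, mulVecLin_apply, hmap]
  exact ((RatFunc.algebraMap_injective F).comp_left.eq_iff' (funext fun _ => map_zero _)).symm

variable {V : Submodule (RatFunc F) (Fin q → RatFunc F)} {N : Matrix (Fin p) (Fin q) F[X]}

lemma IsMinimalBasisOf.vecMul_injective (hN : IsMinimalBasisOf V N) :
    Function.Injective fun a : Fin p → F[X] => a ᵥ* N := by
  intro a b hab
  have h := congrArg (algebraMap F[X] (RatFunc F) ∘ ·) hab
  simp only [algebraMap_comp_vecMul] at h
  exact (RatFunc.algebraMap_injective F).comp_left (Matrix.vecMul_injective_iff.mpr hN.1 h)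

/-- The exchange property: were it false, replacing row `i₀` by `y` would give a basis of
`V` with a smaller sum of row degrees. -/
lemma IsMinimalBasisOf.exists_rowDeg_le_degree (hN : IsMinimalBasisOf V N) {y : Fin q → F[X]}
    {c : Fin p → RatFunc F} (hy : algebraMap F[X] (RatFunc F) ∘ y = c ᵥ* ratMat N) {i₀ : Fin p}
    (hc : c i₀ ≠ 0) : ∃ j, (rowDeg N i₀ : WithBot ℕ) ≤ (y j).degree := by
  by_contra! hlt
  set N' := N.updateRow i₀ y
  have hrow : ratRow N' = Function.update (ratRow N) i₀ (algebraMap F[X] (RatFunc F) ∘ y) := by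
    ext i j
    rcases eq_or_ne i i₀ with rfl | hi
    · simp [N', ratRow]
    · simp [N', ratRow, hi]
  have hli : LinearIndependent (RatFunc F) (ratRow N') := by
    rw [hrow]
    refine hN.1.update i₀ _ ⟨1, one_mem _, Finsupp.equivFunOnFinite.symm c, ?_, ?_⟩
    · exact mem_nonZeroDivisors_of_ne_zero hc
    · rw [one_smul, hy, vecMul_eq_sum, Finsupp.linearCombination_apply,
        Finsupp.sum_fintype _ (fun i a => a • ratRow N i) fun _ => zero_smul _ _]
      rfl
  have hspan : rowSpan N' = V := by
    refine (Submodule.eq_of_le_of_finrank_eq ?_ ?_).trans hN.2.1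
    · refine Submodule.span_le.mpr (Set.range_subset_iff.mpr fun i => ?_)
      rw [hrow]
      rcases eq_or_ne i i₀ with rfl | hi
      · rw [Function.update_self, hy, vecMul_eq_sum]
        exact Submodule.sum_mem _ fun i _ => Submodule.smul_mem _ _ (Submodule.subset_span ⟨i, rfl⟩)
      · rw [Function.update_of_ne hi]
        exact Submodule.subset_span ⟨i, rfl⟩
    · rw [rowSpan, rowSpan, finrank_span_eq_card hli, finrank_span_eq_card hN.1]
  have hy0 : y ≠ 0 := by
    rintro rfl
    refine hli.ne_zero i₀ ?_
    rw [hrow, Function.update_self]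
    ext j
    simp
  obtain ⟨j₁, hj₁⟩ := Function.ne_iff.mp hy0
  have hpos : 0 < rowDeg N i₀ := by
    have := (zero_le_degree_iff.mpr hj₁).trans_lt (hlt j₁)
    exact_mod_cast this
  have hdeg : rowDeg N' i₀ < rowDeg N i₀ := by
    refine (Finset.sup_lt_iff hpos).mpr fun j _ => ?_
    rcases eq_or_ne (y j) 0 with h | h
    · simpa [N', h] using hpos
    · simpa [N', natDegree_lt_iff_degree_lt h] using hlt j
  have hsum : ∑ i, rowDeg N' i < ∑ i, rowDeg N i := by
    refine Finset.sum_lt_sum (fun i _ => ?_) ⟨i₀, Finset.mem_univ _, hdeg⟩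
    rcases eq_or_ne i i₀ with rfl | hi
    · exact hdeg.le
    · simp [rowDeg, N', hi]
  exact (hN.2.2 N' hli hspan).not_gt hsum

lemma IsMinimalBasisOf.linearIndependent_highRowMat (hN : IsMinimalBasisOf V N) :
    LinearIndependent F (highRowMat N).row := by
  classical
  rw [Fintype.linearIndependent_iff]
  intro g hg
  by_contra! hne
  obtain ⟨i₀, hi₀, hmax⟩ := Finset.exists_max_image {i | g i ≠ 0} (rowDeg N)
    (by simpa [Finset.Nonempty] using hne)
  set e := rowDeg N i₀
  replace hmax : ∀ i, g i ≠ 0 → rowDeg N i ≤ e := fun i hi => hmax i (by simpa using hi)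
  set a : Fin p → F[X] := fun i => C (g i) * X ^ (e - rowDeg N i)
  have ha : algebraMap F[X] (RatFunc F) (a i₀) ≠ 0 :=
    RatFunc.algebraMap_ne_zero (by simpa [a] using (Finset.mem_filter.mp hi₀).2)
  obtain ⟨j, hj⟩ := hN.exists_rowDeg_le_degree (algebraMap_comp_vecMul a N) ha
  refine hj.not_gt ((degree_lt_iff_coeff_zero _ _).mpr fun s hs => ?_)
  have hterm : ∀ i, (a i * N i j).coeff s = if s = e then g i * highRowMat N i j else 0 := by
    intro i
    rcases eq_or_ne (g i) 0 with h | h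
    · simp [a, h]
    have hi := hmax i h
    rw [mul_assoc, coeff_C_mul, coeff_X_pow_mul', if_pos (by omega)]
    split_ifs with hse
    · rw [highRowMat, hse, show e - (e - rowDeg N i) = rowDeg N i by omega]
    · rw [coeff_eq_zero_of_natDegree_lt ((natDegree_le_rowDeg N i j).trans_lt (by omega)),
        mul_zero]
  have hgj := congrFun hg j
  simp only [Finset.sum_apply, Pi.smul_apply, smul_eq_mul, Pi.zero_apply, row] at hgj
  simp [vecMul, dotProduct, finsetSum_coeff, hterm, hgj]

lemma natDegree_vecMul_le (N : Matrix (Fin p) (Fin q) F[X]) {a : Fin p → F[X]} {A : ℕ}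
    (hA : ∀ i, a i ≠ 0 → (a i).natDegree + rowDeg N i ≤ A) (j : Fin q) :
    ((a ᵥ* N) j).natDegree ≤ A := by
  change (∑ i, a i * N i j).natDegree ≤ A
  refine natDegree_sum_le_of_forall_le _ _ fun i _ => ?_
  rcases eq_or_ne (a i) 0 with h | h
  · simp [h]
  · have := natDegree_le_rowDeg N i j
    have := hA i h
    exact natDegree_mul_le.trans (by omega)

lemma coeff_vecMul_eq_vecMul_highRowMat (N : Matrix (Fin p) (Fin q) F[X]) {a : Fin p → F[X]}
    {A : ℕ} (hA : ∀ i, a i ≠ 0 → (a i).natDegree + rowDeg N i ≤ A) :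
    (fun j => ((a ᵥ* N) j).coeff A) = (fun i => (a i).coeff (A - rowDeg N i)) ᵥ* highRowMat N := by
  ext j
  simp only [vecMul, dotProduct, finsetSum_coeff]
  refine Finset.sum_congr rfl fun i _ => ?_
  rcases eq_or_ne (a i) 0 with h | h
  · simp [h]
  have hA' : A = (A - rowDeg N i) + rowDeg N i := by have := hA i h; omega
  conv_lhs => rw [hA']
  exact coeff_mul_add_eq_of_natDegree_le (by have := hA i h; omega) (natDegree_le_rowDeg N i j)

/-- The predictable-degree property of a minimal basis. -/
lemma IsMinimalBasisOf.mem_degreeLT_of_vecMul (hN : IsMinimalBasisOf V N) {a : Fin p → F[X]}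
    {k : ℕ} (ha : ∀ j, (a ᵥ* N) j ∈ degreeLT F k) (i : Fin p) :
    a i ∈ degreeLT F (k - rowDeg N i) := by
  classical
  by_contra hi
  have hai : a i ≠ 0 := fun h => hi (h ▸ Submodule.zero_mem _)
  obtain ⟨i₀, hi₀, hmax⟩ := Finset.exists_max_image {i | a i ≠ 0}
    (fun i => (a i).natDegree + rowDeg N i) ⟨i, by simpa using hai⟩
  replace hi₀ : a i₀ ≠ 0 := by simpa using hi₀
  set A := (a i₀).natDegree + rowDeg N i₀
  replace hmax : ∀ i, a i ≠ 0 → (a i).natDegree + rowDeg N i ≤ A :=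
    fun i h => hmax i (by simpa using h)
  have hkA : k ≤ A := by
    rw [mem_degreeLT, degree_eq_natDegree hai, Nat.cast_lt] at hi
    have := hmax i hai
    omega
  have hcoeff : (fun i => (a i).coeff (A - rowDeg N i)) ᵥ* highRowMat N = 0 ᵥ* highRowMat N := by
    rw [← coeff_vecMul_eq_vecMul_highRowMat N hmax, zero_vecMul]
    ext j
    exact coeff_eq_zero_of_degree_lt ((mem_degreeLT.mp (ha j)).trans_le (by exact_mod_cast hkA))
  have h₀ := congrFun (vecMul_injective_iff.mpr hN.linearIndependent_highRowMat hcoeff) i₀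
  simp only [A, Nat.add_sub_cancel, Pi.zero_apply, coeff_natDegree, leadingCoeff_eq_zero] at h₀
  exact hi₀ h₀

/-- A minimal basis has no finite zeros: otherwise `((a % r) ᵥ* N) / r` would be a polynomial
vector of too small a degree for the exchange property. -/
lemma IsMinimalBasisOf.dvd_of_dvd_vecMul (hN : IsMinimalBasisOf V N) {r : F[X]}
    {a : Fin p → F[X]} (h : ∀ j, r ∣ (a ᵥ* N) j) (i : Fin p) : r ∣ a i := by
  classical
  rcases eq_or_ne r 0 with rfl | hr
  · have ha : a ᵥ* N = 0 ᵥ* N := by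
      rw [zero_vecMul]; exact _root_.funext fun j => zero_dvd_iff.mp (h j)
    rw [hN.vecMul_injective ha, Pi.zero_apply]
  by_contra hi
  set b : Fin p → F[X] := fun i => a i % r
  have hb : b = a - r • fun i => a i / r := by
    ext1 i; simp [b, EuclideanDomain.mod_eq_sub_mul_div]
  have hdvd : ∀ j, r ∣ (b ᵥ* N) j := fun j => by
    rw [hb, sub_vecMul, smul_vecMul]
    exact dvd_sub (h j) (dvd_mul_right _ _)
  choose u hu using hdvd
  obtain ⟨i₀, hi₀, hmax⟩ := Finset.exists_max_image {i | b i ≠ 0}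
    (fun i => (b i).natDegree + rowDeg N i)
    ⟨i, by simpa [b] using mt EuclideanDomain.mod_eq_zero.mp hi⟩
  replace hi₀ : b i₀ ≠ 0 := by simpa using hi₀
  replace hmax : ∀ i, b i ≠ 0 → (b i).natDegree + rowDeg N i ≤ (b i₀).natDegree + rowDeg N i₀ :=
    fun i h => hmax i (by simpa using h)
  have hr' : algebraMap F[X] (RatFunc F) r ≠ 0 := RatFunc.algebraMap_ne_zero hr
  set c := (algebraMap F[X] (RatFunc F) r)⁻¹ • (algebraMap F[X] (RatFunc F) ∘ b)
  have hc : algebraMap F[X] (RatFunc F) ∘ u = c ᵥ* ratMat N := by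
    rw [smul_vecMul, ← algebraMap_comp_vecMul]
    ext j
    simp [hu, hr']
  obtain ⟨j, hj⟩ := hN.exists_rowDeg_le_degree hc (i₀ := i₀)
    (smul_ne_zero (inv_ne_zero hr') (RatFunc.algebraMap_ne_zero hi₀))
  have hu₀ : u j ≠ 0 := by
    rintro h
    simp [h] at hj
  have hdeg := natDegree_vecMul_le N hmax j
  rw [hu, natDegree_mul hr hu₀] at hdeg
  have hbr : (b i₀).natDegree < r.natDegree := natDegree_lt_natDegree hi₀ (degree_mod_lt _ hr)
  rw [degree_eq_natDegree hu₀, Nat.cast_le] at hj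
  omega

lemma IsMinimalBasisOf.exists_vecMul_eq (hN : IsMinimalBasisOf V N) {x : Fin q → F[X]}
    (hx : algebraMap F[X] (RatFunc F) ∘ x ∈ V) : ∃ a, a ᵥ* N = x := by
  rw [← hN.2.1, rowSpan, Submodule.mem_span_range_iff_exists_fun] at hx
  obtain ⟨f, hf⟩ := hx
  obtain ⟨⟨b, hb⟩, hint⟩ :=
    IsLocalization.exist_integer_multiples (nonZeroDivisors F[X]) Finset.univ f
  choose a ha using fun i => hint i (Finset.mem_univ i)
  have hab : a ᵥ* N = b • x := by
    apply (RatFunc.algebraMap_injective F).comp_left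
    dsimp only
    have : algebraMap F[X] (RatFunc F) ∘ a = algebraMap F[X] (RatFunc F) b • f :=
      _root_.funext fun i => (ha i).trans (Algebra.smul_def _ _)
    have hf' : f ᵥ* ratMat N = algebraMap F[X] (RatFunc F) ∘ x := by rw [vecMul_eq_sum]; exact hf
    rw [algebraMap_comp_vecMul, this, smul_vecMul, hf']
    ext j
    simp [Algebra.smul_def]
  choose a' ha' using hN.dvd_of_dvd_vecMul fun j => ⟨x j, by rw [hab]; rfl⟩
  refine ⟨a', funext fun j => mul_left_cancel₀ (nonZeroDivisors.ne_zero hb) ?_⟩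
  rw [show a = b • a' from funext ha', smul_vecMul] at hab
  exact congrFun hab j

end MinimalBasis

section Sylvester

variable {m p q e : ℕ} {M : Matrix (Fin m) (Fin q) F[X]}

lemma mul_mem_degreeLT {f g : F[X]} {k : ℕ} (hf : f.natDegree ≤ e) (hg : g ∈ degreeLT F k) :
    f * g ∈ degreeLT F (k + e) := by
  rw [mem_degreeLT, degree_lt_iff_coeff_zero] at hg ⊢
  intro s hs
  rw [coeff_mul]
  refine Finset.sum_eq_zero fun ab hab => ?_
  rw [Finset.HasAntidiagonal.mem_antidiagonal] at hab
  rcases le_or_gt ab.1 e with h | h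
  · rw [hg ab.2 (by omega), mul_zero]
  · rw [coeff_eq_zero_of_natDegree_lt (hf.trans_lt h), zero_mul]

lemma vecMul_mem_degreeLT (N : Matrix (Fin p) (Fin q) F[X]) {a : Fin p → F[X]} {k : ℕ}
    (ha : ∀ i, a i ∈ degreeLT F (k - rowDeg N i)) (j : Fin q) : (a ᵥ* N) j ∈ degreeLT F k := by
  refine Submodule.sum_mem (degreeLT F k) (t := Finset.univ) (f := fun i => a i * N i j)
    fun i _ => ?_
  rcases le_or_gt (rowDeg N i) k with h | h
  · have := mul_mem_degreeLT (natDegree_le_rowDeg N i j) (ha i)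
    rwa [Nat.sub_add_cancel h, mul_comm] at this
  · have hai := ha i
    rw [Nat.sub_eq_zero_of_le h.le] at hai
    simp [(degreeLTEquiv_eq_zero_iff_eq_zero hai).mp (Subsingleton.elim _ _)]

lemma mulVec_mem_degreeLT {k : ℕ}
    (hM : ∀ i j, (M i j).natDegree ≤ e) {y : Fin q → F[X]} (hy : ∀ j, y j ∈ degreeLT F k)
    (i : Fin m) : (M *ᵥ y) i ∈ degreeLT F (k + e) :=
  Submodule.sum_mem (degreeLT F (k + e)) (t := Finset.univ) (f := fun j => M i j * y j)
    fun j _ => mul_mem_degreeLT (hM i j) (hy j)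

lemma coeff_mul_eq_sum_fin {f g : F[X]} {k : ℕ} (hf : f.natDegree ≤ e) (hg : g ∈ degreeLT F k)
    (r : ℕ) : (f * g).coeff r
      = ∑ t : Fin k, if (t : ℕ) ≤ r ∧ r ≤ t + e then f.coeff (r - t) * g.coeff t else 0 := by
  have hg' : ∑ t : Fin k, monomial t (g.coeff t) = g :=
    (sum_fin (fun n a => monomial n a) (by simp) (mem_degreeLT.mp hg)).trans g.sum_monomial_eq
  conv_lhs => rw [← hg', Finset.mul_sum, finsetSum_coeff]
  refine Finset.sum_congr rfl fun t _ => ?_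
  rw [← C_mul_X_pow_eq_monomial, ← mul_assoc, coeff_mul_X_pow', coeff_mul_C]
  split_ifs with h₁ h₂ h₂ <;> try rfl
  · rw [coeff_eq_zero_of_natDegree_lt (hf.trans_lt (by omega)), zero_mul]
  · omega

def coeffVec (k : ℕ) (y : Fin q → F[X]) : Fin k × Fin q → F :=
  fun tj => (y tj.2).coeff tj.1

lemma sylv_mulVec_coeffVec {k : ℕ}
    (hM : ∀ i j, (M i j).natDegree ≤ e) {y : Fin q → F[X]} (hy : ∀ j, y j ∈ degreeLT F k) :
    sylv e k M *ᵥ coeffVec k y = coeffVec (k + e) (M *ᵥ y) := by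
  ext ⟨r, i⟩
  simp only [mulVec, dotProduct, coeffVec, finsetSum_coeff, coeff_mul_eq_sum_fin (hM i _) (hy _),
    Fintype.sum_prod_type, sylv]
  rw [Finset.sum_comm]
  refine Finset.sum_congr rfl fun j _ => Finset.sum_congr rfl fun t _ => ?_
  split_ifs <;> ring

lemma exists_coeffVec_eq (k : ℕ) (x : Fin k × Fin q → F) :
    ∃ y : Fin q → F[X], (∀ j, y j ∈ degreeLT F k) ∧ coeffVec k y = x :=
  ⟨fun j => (degreeLTEquiv F k).symm fun t => x (t, j), fun j => Subtype.prop _,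
    by ext ⟨t, j⟩; exact congrFun ((degreeLTEquiv F k).apply_symm_apply _) t⟩

lemma coeffVec_injOn (k : ℕ) : Set.InjOn (coeffVec (q := q) k) {y | ∀ j, y j ∈ degreeLT F k} :=
  fun y hy z hz h => _root_.funext fun j => congrArg Subtype.val
    ((degreeLTEquiv F k).injective (a₁ := ⟨y j, hy j⟩) (a₂ := ⟨z j, hz j⟩)
      (_root_.funext fun t => congrFun h (t, j)))

lemma coeffVec_zero (k : ℕ) : coeffVec k (0 : Fin q → F[X]) = 0 := by
  ext
  simp [coeffVec]

lemma sylv_mulVec_coeffVec_eq_zero_iff {k : ℕ}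
    (hM : ∀ i j, (M i j).natDegree ≤ e) {y : Fin q → F[X]} (hy : ∀ j, y j ∈ degreeLT F k) :
    sylv e k M *ᵥ coeffVec k y = 0 ↔ M *ᵥ y = 0 := by
  rw [sylv_mulVec_coeffVec hM hy, ← coeffVec_zero (k + e)]
  refine ⟨fun h => coeffVec_injOn _ (mulVec_mem_degreeLT hM hy) (fun _ => zero_mem _) h,
    fun h => by rw [h]⟩

def vecMulCoeffs (N : Matrix (Fin p) (Fin q) F[X]) (k : ℕ) :
    (∀ i, degreeLT F (k - rowDeg N i)) →ₗ[F] Fin k × Fin q → F where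
  toFun a := coeffVec k ((fun i => (a i : F[X])) ᵥ* N)
  map_add' a b := by
    change coeffVec k (((fun i => (a i : F[X])) + fun i => (b i : F[X])) ᵥ* N) = _
    ext
    simp [coeffVec, add_vecMul]
  map_smul' c a := by
    change coeffVec k ((c • fun i => (a i : F[X])) ᵥ* N) = _
    ext
    simp [coeffVec, smul_vecMul]

variable {N : Matrix (Fin p) (Fin q) F[X]}

lemma IsMinimalBasisOf.injective_vecMulCoeffs {V : Submodule (RatFunc F) (Fin q → RatFunc F)}
    (hN : IsMinimalBasisOf V N) (k : ℕ) : Function.Injective (vecMulCoeffs N k) := by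
  intro a b hab
  have h := coeffVec_injOn k (vecMul_mem_degreeLT N fun i => (a i).2)
    (vecMul_mem_degreeLT N fun i => (b i).2) hab
  exact funext fun i => Subtype.ext (congrFun (hN.vecMul_injective h) i)

lemma IsMinimalBasisOf.range_vecMulCoeffs (hM : ∀ i j, (M i j).natDegree ≤ e)
    (hN : IsMinimalBasisOf (rightNullSpace M) N) (k : ℕ) :
    LinearMap.range (vecMulCoeffs N k) = LinearMap.ker (sylv e k M).mulVecLin := by
  ext x
  obtain ⟨y, hy, rfl⟩ := exists_coeffVec_eq k x
  rw [LinearMap.mem_ker, mulVecLin_apply, sylv_mulVec_coeffVec_eq_zero_iff hM hy,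
    mulVec_eq_zero_iff_mem_rightNullSpace]
  constructor
  · rintro ⟨a, ha⟩
    rw [← coeffVec_injOn k (vecMul_mem_degreeLT N fun i => (a i).2) hy ha, ← hN.2.1]
    exact algebraMap_comp_vecMul_mem_rowSpan _ N
  · intro hyN
    obtain ⟨a, rfl⟩ := hN.exists_vecMul_eq hyN
    exact ⟨fun i => ⟨a i, hN.mem_degreeLT_of_vecMul hy i⟩, rfl⟩

theorem IsMinimalBasisOf.finrank_ker_sylv (hM : ∀ i j, (M i j).natDegree ≤ e)
    (hN : IsMinimalBasisOf (rightNullSpace M) N) (k : ℕ) :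
    Module.finrank F (LinearMap.ker (sylv e k M).mulVecLin) = ∑ i, (k - rowDeg N i) := by
  rw [← hN.range_vecMulCoeffs hM k, LinearMap.finrank_range_of_inj (hN.injective_vecMulCoeffs k),
    Module.finrank_pi_fintype]
  simp [(degreeLTEquiv F _).finrank_eq]

end Sylvester

theorem sum_rightMinimalIndices_eq_general {F : Type*} [Field F] {m n d : ℕ}
    (M : Matrix (Fin m) (Fin (m + n)) F[X]) (hdeg : ∀ i j, (M i j).natDegree ≤ d)
    (N : Matrix (Fin n) (Fin (m + n)) F[X])
    (hN : IsMinimalBasisOf (rightNullSpace M) N)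
    (d' : ℕ) (hd' : Finset.univ.sup (fun i => rowDeg N i) = d') :
    ((∑ i, rowDeg N i : ℕ) : ℤ)
        = (n : ℤ) * d' - ((d' * (m + n) - (sylv d d' M).rank : ℕ) : ℤ) ∧
    ((∑ i, rowDeg N i : ℕ) : ℤ) = ((sylv d d' M).rank : ℤ) - (m : ℤ) * d' := by
  have hnullity := hN.finrank_ker_sylv hdeg d'
  have hrank := LinearMap.finrank_range_add_finrank_ker (sylv d d' M).mulVecLin
  rw [← Matrix.rank, hnullity, Module.finrank_fintype_fun_eq_card, Fintype.card_prod,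
    Fintype.card_fin, Fintype.card_fin] at hrank
  have hsum : ∑ i, (d' - rowDeg N i) + ∑ i, rowDeg N i = n * d' := by
    rw [← Finset.sum_add_distrib, Finset.sum_congr rfl fun i _ =>
      Nat.sub_add_cancel (hd' ▸ Finset.le_sup (f := fun i => rowDeg N i) (Finset.mem_univ i))]
    simp
  have hle : (sylv d d' M).rank ≤ d' * (m + n) := by omega
  zify [hle] at hrank hsum ⊢
  constructor <;> linarith

/-- The sum of the right minimal indices `ε_1, …, ε_n` of `M(λ)` equals
`n·d' - n_{d'} = r_{d'} - m·d'`, where `d'` is the maximum right minimal index. -/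
theorem sum_rightMinimalIndices_eq {F : Type*} [Field F] {m n d : ℕ}
    (hm : 0 < m) (hn : 0 < n) (hd : 0 < d)
    (M : Matrix (Fin m) (Fin (m + n)) F[X]) (hdeg : ∀ i j, (M i j).natDegree ≤ d)
    (hrk : (ratMat M).rank = m)
    (N : Matrix (Fin n) (Fin (m + n)) F[X])
    (hN : IsMinimalBasisOf (rightNullSpace M) N)
    (d' : ℕ) (hd' : Finset.univ.sup (fun i => rowDeg N i) = d') :
    ((∑ i, rowDeg N i : ℕ) : ℤ)
        = (n : ℤ) * d' - ((d' * (m + n) - (sylv d d' M).rank : ℕ) : ℤ) ∧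
    ((∑ i, rowDeg N i : ℕ) : ℤ) = ((sylv d d' M).rank : ℤ) - (m : ℤ) * d' :=
  sum_rightMinimalIndices_eq_general M hdeg N hN d' hd'
end
end

section
/- Let M(λ) ∈ F[λ]^{m×(m+n)} be a polynomial matrix of degree at most d, let S_k be its Sylvester matrices, and let k' = ⌈md/n⌉ and t = nk' − md, so that 0 ≤ t < n. Then: (a) k' is the smallest index k for which the number of columns k(m+n) of S_k is greater than or equal to its number of rows (k+d)m; (b) if k' > 1 and t > 0, then M(λ) has full-Sylvester-rank if and only if S_{k'−1} has full column rank and S_{k'} has full row rank; (c) if k' = 1 or t = 0, then M(λ) has full-Sylvester-rank if and only if S_{k'} has full row rank. -/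
open Polynomial Matrix

noncomputable section

variable {F : Type*} [Field F]

/-!
`S_k` is obtained from `S_{k+1}` both by deleting its last block row and block column and by
deleting its first block row and block column, and in each case the deleted block row vanishes
on the retained columns. Hence full column rank passes from `S_{k+1}` down to `S_k`, and full
row rank passes from `S_k` up to `S_{k+1}`: a left null vector of `S_{k+1}` restricts to left
null vectors of both copies of `S_k`, which together cover all block rows once `k + d ≥ 1`.
Since `S_k` is at least as wide as it is tall exactly when `k ≥ k'`, full-Sylvester-rank
reduces to full column rank of `S_{k'-1}` and full row rank of `S_{k'}`; when `t = 0` the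
matrix `S_{k'}` is square, and the first condition follows from the second.
-/

namespace Matrix

variable {R K : Type*} {m n m' n' : Type*}

theorem rank_eq_card_height_iff [Field K] [Fintype m] [Fintype n] (A : Matrix m n K) :
    A.rank = Fintype.card m ↔ LinearIndependent K A.row := by
  rw [rank_eq_finrank_span_row, linearIndependent_iff_card_eq_finrank_span, Set.finrank, eq_comm]

theorem rank_eq_card_width_iff [Field K] [Fintype n] (A : Matrix m n K) :
    A.rank = Fintype.card n ↔ LinearIndependent K A.col := by
  rw [rank_eq_finrank_span_cols, linearIndependent_iff_card_eq_finrank_span, Set.finrank, eq_comm]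

theorem linearIndependent_col_submatrix [Semiring R] (A : Matrix m n R) {r : m' → m}
    {c : n' → n} (hr : Function.Injective r) (hc : Function.Injective c)
    (hA : ∀ i ∉ Set.range r, ∀ j, A i (c j) = 0) (h : LinearIndependent R A.col) :
    LinearIndependent R (A.submatrix r c).col := by
  have hcomp : Function.ExtendByZero.linearMap R r ∘ (A.submatrix r c).col = A.col ∘ c := by
    funext j i
    simp only [Function.comp_apply, Function.ExtendByZero.linearMap_apply]
    by_cases hi : i ∈ Set.range r
    · obtain ⟨i, rfl⟩ := hi
      exact hr.extend_apply _ _ i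
    · rw [Function.extend_apply' _ _ _ fun ⟨a, ha⟩ => hi ⟨a, ha⟩]
      exact (hA i hi j).symm
  exact LinearIndependent.of_comp _ (hcomp ▸ h.comp c hc)

theorem vecMul_submatrix_of_eq_zero [NonUnitalNonAssocSemiring R] [Fintype m] [Fintype m']
    (A : Matrix m n R) {r : m' → m} (hr : Function.Injective r) (c : n' → n)
    (hA : ∀ i ∉ Set.range r, ∀ j, A i (c j) = 0) (g : m → R) :
    (g ∘ r) ᵥ* A.submatrix r c = (g ᵥ* A) ∘ c := by
  funext j
  exact Fintype.sum_of_injective r hr _ _ (fun i hi => by simp [hA i hi j]) (fun _ => rfl)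

theorem comp_eq_zero_of_vecMul_eq_zero [Semiring R] [Fintype m] [Fintype m'] (A : Matrix m n R)
    {r : m' → m} (hr : Function.Injective r) {c : n' → n}
    (hA : ∀ i ∉ Set.range r, ∀ j, A i (c j) = 0) (h : LinearIndependent R (A.submatrix r c).row)
    {g : m → R} (hg : g ᵥ* A = 0) : g ∘ r = 0 :=
  vecMul_injective_iff.2 h <| by
    simp only [vecMul_submatrix_of_eq_zero A hr c hA, hg, zero_vecMul]
    rfl

theorem linearIndependent_row_of_submatrix_cover [Ring R] [Fintype m] (A : Matrix m n R)
    {m₁ m₂ n₁ n₂ : Type*} [Fintype m₁] [Fintype m₂]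
    {r₁ : m₁ → m} {c₁ : n₁ → n} {r₂ : m₂ → m} {c₂ : n₂ → n}
    (hr₁ : Function.Injective r₁) (hr₂ : Function.Injective r₂)
    (hA₁ : ∀ i ∉ Set.range r₁, ∀ j, A i (c₁ j) = 0) (hA₂ : ∀ i ∉ Set.range r₂, ∀ j, A i (c₂ j) = 0)
    (hcover : ∀ i, i ∈ Set.range r₁ ∨ i ∈ Set.range r₂)
    (h₁ : LinearIndependent R (A.submatrix r₁ c₁).row)
    (h₂ : LinearIndependent R (A.submatrix r₂ c₂).row) :
    LinearIndependent R A.row := by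
  refine vecMul_injective_iff.1 <| (injective_iff_map_eq_zero (vecMulLinear A)).2 fun g hg => ?_
  have hg₁ := comp_eq_zero_of_vecMul_eq_zero A hr₁ hA₁ h₁ hg
  have hg₂ := comp_eq_zero_of_vecMul_eq_zero A hr₂ hA₂ h₂ hg
  funext i
  rcases hcover i with ⟨i, rfl⟩ | ⟨i, rfl⟩
  · exact congrFun hg₁ i
  · exact congrFun hg₂ i

end Matrix

section Sylvester

variable {p q : ℕ}

theorem sylv_eq_submatrix_castSucc (e k : ℕ) (M : Matrix (Fin p) (Fin q) F[X]) :
    sylv e k M = (sylv e (k + 1) M).submatrix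
      (Prod.map (Fin.cast (Nat.add_right_comm k e 1) ∘ Fin.castSucc) id)
      (Prod.map Fin.castSucc id) :=
  rfl

theorem sylv_eq_submatrix_succ (e k : ℕ) (M : Matrix (Fin p) (Fin q) F[X]) :
    sylv e k M = (sylv e (k + 1) M).submatrix
      (Prod.map (Fin.cast (Nat.add_right_comm k e 1) ∘ Fin.succ) id)
      (Prod.map Fin.succ id) := by
  ext ⟨i, a⟩ ⟨j, b⟩
  simp only [sylv, submatrix_apply, Prod.map_fst, Prod.map_snd, Function.comp_apply,
    Fin.val_cast, Fin.val_succ, id_eq, Nat.add_sub_add_right, Nat.add_le_add_iff_right]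
  split_ifs <;> first | rfl | omega

theorem sylv_succ_apply_castSucc_eq_zero (e k : ℕ) (M : Matrix (Fin p) (Fin q) F[X])
    (i : Fin (k + 1 + e) × Fin p)
    (hi : i ∉ Set.range (Prod.map (Fin.cast (Nat.add_right_comm k e 1) ∘ Fin.castSucc) id))
    (j : Fin k × Fin q) : sylv e (k + 1) M i (Prod.map Fin.castSucc id j) = 0 := by
  have hi_last : (i.1 : ℕ) = k + e := by
    by_contra h
    exact hi ⟨(⟨i.1, by omega⟩, i.2), rfl⟩
  exact if_neg (by simp only [Prod.map_fst, Fin.val_castSucc]; omega)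

theorem sylv_succ_apply_succ_eq_zero (e k : ℕ) (M : Matrix (Fin p) (Fin q) F[X])
    (i : Fin (k + 1 + e) × Fin p)
    (hi : i ∉ Set.range (Prod.map (Fin.cast (Nat.add_right_comm k e 1) ∘ Fin.succ) id))
    (j : Fin k × Fin q) : sylv e (k + 1) M i (Prod.map Fin.succ id j) = 0 := by
  have hi_first : (i.1 : ℕ) = 0 := by
    by_contra h
    exact hi ⟨(⟨i.1 - 1, by omega⟩, i.2), Prod.ext (Fin.ext (by simp; omega)) rfl⟩
  exact if_neg (by simp only [Prod.map_fst, Fin.val_succ]; omega)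

variable {e : ℕ} {M : Matrix (Fin p) (Fin q) F[X]}

theorem linearIndependent_col_sylv_of_succ {k : ℕ}
    (h : LinearIndependent F (sylv e (k + 1) M).col) : LinearIndependent F (sylv e k M).col := by
  rw [sylv_eq_submatrix_castSucc]
  exact linearIndependent_col_submatrix _
    ((Fin.cast_injective _).comp (Fin.castSucc_injective _) |>.prodMap Function.injective_id)
    ((Fin.castSucc_injective _).prodMap Function.injective_id)
    (sylv_succ_apply_castSucc_eq_zero e k M) h

theorem linearIndependent_row_sylv_succ {k : ℕ} (hke : 0 < k + e)
    (h : LinearIndependent F (sylv e k M).row) : LinearIndependent F (sylv e (k + 1) M).row := by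
  refine linearIndependent_row_of_submatrix_cover _
    ((Fin.cast_injective _).comp (Fin.castSucc_injective _) |>.prodMap Function.injective_id)
    ((Fin.cast_injective _).comp (Fin.succ_injective _) |>.prodMap Function.injective_id)
    (sylv_succ_apply_castSucc_eq_zero e k M) (sylv_succ_apply_succ_eq_zero e k M) ?_
    (sylv_eq_submatrix_castSucc e k M ▸ h) (sylv_eq_submatrix_succ e k M ▸ h)
  rintro ⟨i, a⟩
  by_cases hi : (i : ℕ) < k + e
  · exact Or.inl ⟨(⟨i, hi⟩, a), rfl⟩
  · exact Or.inr ⟨(⟨i - 1, by omega⟩, a), Prod.ext (Fin.ext (by simp; omega)) rfl⟩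

theorem rank_sylv_eq_width_iff (k : ℕ) :
    (sylv e k M).rank = k * q ↔ LinearIndependent F (sylv e k M).col := by
  simpa using rank_eq_card_width_iff (sylv e k M)

theorem rank_sylv_eq_height_iff (k : ℕ) :
    (sylv e k M).rank = (k + e) * p ↔ LinearIndependent F (sylv e k M).row := by
  simpa using rank_eq_card_height_iff (sylv e k M)

theorem rank_sylv_eq_width_of_le {k l : ℕ} (h : (sylv e k M).rank = k * q) (hlk : l ≤ k) :
    (sylv e l M).rank = l * q := by
  rw [rank_sylv_eq_width_iff] at h ⊢
  induction k, hlk using Nat.le_induction with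
  | base => exact h
  | succ k _ ih => exact ih (linearIndependent_col_sylv_of_succ h)

theorem rank_sylv_eq_height_of_le {k l : ℕ} (hke : 0 < k + e)
    (h : (sylv e k M).rank = (k + e) * p) (hkl : k ≤ l) :
    (sylv e l M).rank = (l + e) * p := by
  rw [rank_sylv_eq_height_iff] at h ⊢
  induction l, hkl using Nat.le_induction with
  | base => exact h
  | succ l hkl ih => exact linearIndependent_row_sylv_succ (by omega) ih

theorem rank_sylv_zero : (sylv e 0 M).rank = 0 :=
  Nat.le_zero.1 <| by simpa using rank_le_card_width (sylv e 0 M)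

theorem hasFullSylvesterRank_iff_of_threshold {k₀ : ℕ} (hk₀ : 0 < k₀)
    (hthr : ∀ k, (k + e) * p ≤ k * q ↔ k₀ ≤ k) :
    HasFullSylvesterRank e M ↔
      (sylv e (k₀ - 1) M).rank = (k₀ - 1) * q ∧ (sylv e k₀ M).rank = (k₀ + e) * p := by
  have hmin_row : ∀ k, k₀ ≤ k → min ((k + e) * p) (k * q) = (k + e) * p :=
    fun k hk => min_eq_left ((hthr k).2 hk)
  have hmin_col : ∀ k, k < k₀ → min ((k + e) * p) (k * q) = k * q :=
    fun k hk => min_eq_right (le_of_not_ge fun h => by have := (hthr k).1 h; omega)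
  constructor
  · intro hF
    refine ⟨?_, by rw [hF k₀ hk₀, hmin_row k₀ le_rfl]⟩
    rcases Nat.lt_or_ge 1 k₀ with hk₀' | hk₀'
    · rw [hF (k₀ - 1) (by omega), hmin_col (k₀ - 1) (by omega)]
    · rw [show k₀ - 1 = 0 by omega, rank_sylv_zero, zero_mul]
  · rintro ⟨hcol, hrow⟩ k hk
    rcases le_or_gt k₀ k with hk₀k | hkk₀
    · rw [hmin_row k hk₀k]
      exact rank_sylv_eq_height_of_le (by omega) hrow hk₀k
    · rw [hmin_col k hkk₀]
      exact rank_sylv_eq_width_of_le hcol (by omega)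

end Sylvester

theorem add_mul_le_mul_add_iff_le {m n d k' t : ℕ} (ht : n * k' = m * d + t) (htn : t < n)
    (k : ℕ) : (k + d) * m ≤ k * (m + n) ↔ k' ≤ k := by
  have hexp : (k + d) * m ≤ k * (m + n) ↔ m * d ≤ n * k := by
    constructor <;> intro h <;> nlinarith
  rw [hexp]
  constructor
  · intro h
    by_contra! hlt
    nlinarith [Nat.mul_le_mul_left n (Nat.succ_le_of_lt hlt)]
  · intro h
    nlinarith [Nat.mul_le_mul_left n h]

theorem hasFullSylvesterRank_iff_two_ranks_general {F : Type*} [Field F] {m n d : ℕ}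
    (hm : 0 < m) (hd : 0 < d)
    (M : Matrix (Fin m) (Fin (m + n)) F[X]) (k' t : ℕ)
    (ht : n * k' = m * d + t) (htn : t < n) :
    ((k' + d) * m ≤ k' * (m + n) ∧ ∀ k < k', ¬((k + d) * m ≤ k * (m + n))) ∧
    (1 < k' → 0 < t →
      (HasFullSylvesterRank d M ↔
        (sylv d (k' - 1) M).rank = (k' - 1) * (m + n) ∧
        (sylv d k' M).rank = (k' + d) * m)) ∧
    (k' = 1 ∨ t = 0 →
      (HasFullSylvesterRank d M ↔ (sylv d k' M).rank = (k' + d) * m)) := by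
  have hthr := add_mul_le_mul_add_iff_le ht htn
  have hk' : 0 < k' := Nat.pos_of_ne_zero fun h => by
    subst h
    nlinarith [Nat.mul_pos hm hd]
  have hfull := hasFullSylvesterRank_iff_of_threshold (M := M) hk' hthr
  refine ⟨⟨(hthr k').2 le_rfl, fun k hk h => absurd ((hthr k).1 h) (by omega)⟩,
    fun _ _ => hfull, fun hcase => hfull.trans ⟨And.right, fun hrow => ⟨?_, hrow⟩⟩⟩
  rcases hcase with rfl | rfl
  · exact rank_sylv_zero.trans (zero_mul _).symm
  · have hsquare : (k' + d) * m = k' * (m + n) := by nlinarith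
    exact rank_sylv_eq_width_of_le (hsquare ▸ hrow) (Nat.sub_le k' 1)

/-- At most two rank tests determine full-Sylvester-rank, where `k' = ⌈md/n⌉` and
`nk' = md + t` with `0 ≤ t < n`: (a) `k'` is the smallest index `k` for which `S_k`
has at least as many columns as rows; (b) if `k' > 1` and `t > 0`, `M(λ)` has
full-Sylvester-rank iff `S_{k'-1}` has full column rank and `S_{k'}` full row rank;
(c) if `k' = 1` or `t = 0`, iff `S_{k'}` has full row rank. -/
theorem hasFullSylvesterRank_iff_two_ranks {F : Type*} [Field F] {m n d : ℕ}
    (hm : 0 < m) (hn : 0 < n) (hd : 0 < d)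
    (M : Matrix (Fin m) (Fin (m + n)) F[X]) (hdeg : ∀ i j, (M i j).natDegree ≤ d)
    (k' t : ℕ) (hk' : k' = ⌈(m * d : ℚ) / (n : ℚ)⌉₊)
    (ht : n * k' = m * d + t) (htn : t < n) :
    ((k' + d) * m ≤ k' * (m + n) ∧ ∀ k < k', ¬((k + d) * m ≤ k * (m + n))) ∧
    (1 < k' → 0 < t →
      (HasFullSylvesterRank d M ↔
        (sylv d (k' - 1) M).rank = (k' - 1) * (m + n) ∧
        (sylv d k' M).rank = (k' + d) * m)) ∧
    (k' = 1 ∨ t = 0 →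
      (HasFullSylvesterRank d M ↔ (sylv d k' M).rank = (k' + d) * m)) :=
  hasFullSylvesterRank_iff_two_ranks_general hm hd M k' t ht htn

end
end

section
/- Let F = ℝ or ℂ, let M(λ) ∈ F[λ]^{m×(m+n)}_d have full-Sylvester-rank and let k' = ⌈md/n⌉ and t = nk' − md. Then: (a) if k' > 1 and t > 0, every M̃(λ) ∈ F[λ]^{m×(m+n)}_d with ‖S_1(M) − S_1(M̃)‖_2 < min{ σ_{(k'−1)(m+n)}(S_{k'−1}(M))/√(k'−1), σ_{(k'+d)m}(S_{k'}(M))/√k' } has full-Sylvester-rank; (b) if k' = 1 or t = 0, every M̃(λ) ∈ F[λ]^{m×(m+n)}_d with ‖S_1(M) − S_1(M̃)‖_2 < σ_{(k'+d)m}(S_{k'}(M))/√k' has full-Sylvester-rank. -/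
/-!
A perturbation of `S_1(M)` of spectral norm `ε` perturbs `S_k(M)` by at most `√k ε`, because
`S_k` acts on each block of its argument as a shifted copy of `S_1`. By the variational
characterization of singular values, a perturbation of norm below `σ_j(A)` cannot bring the rank
below `j`. Hence `S_{k'}(M̃)` keeps full row rank and `S_{k'-1}(M̃)` keeps full column rank (in
case (b) the latter is automatic: `S_0` has no columns, or `S_{k'}` is square and its column rank
passes down). Full row rank of `S_{k'}` propagates to every `S_k` with `k ≥ k'`, since each window
of `k' + d` consecutive block rows of `S_k` contains a copy of `S_{k'}` and nothing else in the
matching block columns; full column rank of `S_{k'-1}` propagates to every smaller `k`, since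
`S_k` is the top-left corner of `S_{k'-1}` with zeros below it. As `k' = ⌈md/n⌉`, these are
exactly the ranks `min{(k+d)m, k(m+n)}`.
-/

open Polynomial Matrix

noncomputable section

variable {F : Type*} [Field F]

variable {𝕜 : Type*} [RCLike 𝕜]

/-- The spectral norm (largest singular value) of a matrix. -/
def sNorm {a b : Type*} [Fintype a] [Fintype b] [DecidableEq b]
    (A : Matrix a b 𝕜) : ℝ :=
  ‖LinearMap.toContinuousLinearMap (Matrix.toEuclideanLin A)‖

/-- The Frobenius norm of a matrix. -/
def fNorm {a b : Type*} [Fintype a] [Fintype b] (A : Matrix a b 𝕜) : ℝ :=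
  Real.sqrt (∑ i, ∑ j, ‖A i j‖ ^ 2)

/-- The `j`-th largest singular value of a matrix (`j = 1, 2, …`), via the
Courant–Fischer variational characterization. -/
def singVal {a b : Type*} [Fintype a] [Fintype b] [DecidableEq b]
    (A : Matrix a b 𝕜) (j : ℕ) : ℝ :=
  sSup {r : ℝ | ∃ V : Submodule 𝕜 (EuclideanSpace 𝕜 b),
    Module.finrank 𝕜 V = j ∧ ∀ x ∈ V, r * ‖x‖ ≤ ‖Matrix.toEuclideanLin A x‖}

open Function

namespace Matrix

section Submatrix

variable {R : Type*} [NonUnitalNonAssocSemiring R] {l m n o : Type*} {A : Matrix l n R}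
  {f : m → l} {g : o → n}

theorem mulVec_extend_zero [Fintype n] [Fintype o] (hf : Injective f) (hg : Injective g)
    (hA : ∀ i c, i ∉ Set.range f → A i (g c) = 0) (x : o → R) :
    A *ᵥ extend g x 0 = extend f (A.submatrix f g *ᵥ x) 0 := by
  have hsum (i : l) : (A *ᵥ extend g x 0) i = ∑ c, A i (g c) * x c :=
    (Fintype.sum_of_injective g hg _ _
      (fun j hj => by rw [extend_apply' _ _ _ hj, Pi.zero_apply, mul_zero])
      (fun c => by rw [hg.extend_apply])).symm
  funext i
  by_cases hi : i ∈ Set.range f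
  · obtain ⟨i, rfl⟩ := hi
    rw [hsum, hf.extend_apply]
    rfl
  · rw [hsum, extend_apply' _ _ _ hi, Finset.sum_eq_zero fun c _ => by rw [hA i c hi, zero_mul]]
    rfl

theorem comp_vecMul_submatrix [Fintype l] [Fintype m] (hf : Injective f)
    (hA : ∀ i c, i ∉ Set.range f → A i (g c) = 0) (y : l → R) :
    (y ∘ f) ᵥ* A.submatrix f g = (y ᵥ* A) ∘ g :=
  funext fun c => Fintype.sum_of_injective f hf _ _
    (fun i hi => mul_eq_zero_of_right _ (hA i c hi)) (fun _ => rfl)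

end Submatrix

section Rank

variable {K : Type*} [Field K] {m n : Type*} [Fintype n] {A : Matrix m n K}

theorem mulVec_injective_iff_card_le_rank : Injective A.mulVec ↔ Fintype.card n ≤ A.rank := by
  rw [mulVec_injective_iff, linearIndependent_iff_card_le_finrank_span, rank_eq_finrank_span_cols]
  rfl

theorem vecMul_injective_iff_card_le_rank [Fintype m] :
    Injective A.vecMul ↔ Fintype.card m ≤ A.rank := by
  rw [← rank_transpose, ← mulVec_injective_iff_card_le_rank]
  congr! 1
  exact funext fun v => (mulVec_transpose A v).symm

end Rank

end Matrix

def shiftBlock {a b : ℕ} (s : ℕ) (h : s + a ≤ b) (ι : Type*) : Fin a × ι → Fin b × ι :=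
  fun x => (⟨s + x.1, by omega⟩, x.2)

theorem shiftBlock_injective {a b : ℕ} (s : ℕ) (h : s + a ≤ b) (ι : Type*) :
    Injective (shiftBlock s h ι) := by
  rintro ⟨j, c⟩ ⟨j', c'⟩ hjj'
  simp only [shiftBlock, Prod.mk.injEq, Fin.mk.injEq, Nat.add_left_cancel_iff] at hjj'
  exact Prod.ext (Fin.ext hjj'.1) hjj'.2

section Sylvester

variable {p q e k K s : ℕ} (N : Matrix (Fin p) (Fin q) F[X])

theorem sylv_submatrix_shiftBlock (h : s + k ≤ K) :
    (sylv e K N).submatrix (shiftBlock s (by omega : s + (k + e) ≤ K + e) _)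
      (shiftBlock s h _) = sylv e k N := by
  ext r c
  simp only [sylv, submatrix_apply, shiftBlock]
  congr 1
  · simp only [add_le_add_iff_left, add_assoc]
  · rw [Nat.add_sub_add_left]

theorem sylv_shiftBlock_eq_zero (h : s + k ≤ K) (r : Fin (K + e) × Fin p) (c : Fin k × Fin q)
    (hr : r ∉ Set.range (shiftBlock s (by omega : s + (k + e) ≤ K + e) _)) :
    sylv e K N r (shiftBlock s h _ c) = 0 := by
  refine if_neg fun hrc => hr ⟨(⟨r.1 - s, ?_⟩, r.2), Prod.ext (Fin.ext ?_) rfl⟩ <;>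
    simp only [shiftBlock] at hrc ⊢ <;> omega

theorem sylv_mulVec_extend_shiftBlock (h : s + k ≤ K) (x : Fin k × Fin q → F) :
    sylv e K N *ᵥ extend (shiftBlock s h _) x 0 =
      extend (shiftBlock s (by omega : s + (k + e) ≤ K + e) _) (sylv e k N *ᵥ x) 0 := by
  rw [mulVec_extend_zero (shiftBlock_injective _ _ _) (shiftBlock_injective _ _ _)
    (sylv_shiftBlock_eq_zero N h), sylv_submatrix_shiftBlock]

theorem vecMul_sylv_shiftBlock (h : s + k ≤ K) (y : Fin (K + e) × Fin p → F) :
    (y ∘ shiftBlock s (by omega : s + (k + e) ≤ K + e) _) ᵥ* sylv e k N =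
      (y ᵥ* sylv e K N) ∘ shiftBlock s h _ := by
  rw [← comp_vecMul_submatrix (shiftBlock_injective _ _ _) (sylv_shiftBlock_eq_zero N h),
    sylv_submatrix_shiftBlock]

theorem sylv_mulVec_injective_of_le (hkK : k ≤ K) (hinj : Injective (sylv e K N).mulVec) :
    Injective (sylv e k N).mulVec := by
  have h : 0 + k ≤ K := by omega
  intro x x' hxx'
  refine extend_injective (shiftBlock_injective 0 h _) (0 : Fin K × Fin q → F) (hinj ?_)
  simp only [sylv_mulVec_extend_shiftBlock N h]
  exact congrArg (extend _ · (0 : Fin (K + e) × Fin p → F)) hxx'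

theorem sylv_vecMul_injective_of_le (hk : 0 < k) (hkK : k ≤ K)
    (hinj : Injective (sylv e k N).vecMul) : Injective (sylv e K N).vecMul := by
  intro y y' hyy'
  funext r
  set s := min r.1.val (K - k)
  have hs : s + k ≤ K := by omega
  have hwindow : y ∘ shiftBlock s (by omega : s + (k + e) ≤ K + e) _ =
      y' ∘ shiftBlock s (by omega : s + (k + e) ≤ K + e) _ := hinj <| by
    simp only [vecMul_sylv_shiftBlock N hs]
    exact congrArg (· ∘ _) hyy'
  have hr : shiftBlock s (by omega : s + (k + e) ≤ K + e) _ (⟨r.1 - s, by omega⟩, r.2) = r :=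
    Prod.ext (Fin.ext (by simp only [shiftBlock]; omega)) rfl
  rw [← hr]
  exact congrFun hwindow _

theorem width_le_rank_sylv_of_le (hkK : k ≤ K) (h : K * q ≤ (sylv e K N).rank) :
    k * q ≤ (sylv e k N).rank := by
  have hinj := sylv_mulVec_injective_of_le N hkK
    (mulVec_injective_iff_card_le_rank.2 (by simpa using h))
  simpa using mulVec_injective_iff_card_le_rank.1 hinj

theorem height_le_rank_sylv_of_le (hk : 0 < k) (hkK : k ≤ K)
    (h : (k + e) * p ≤ (sylv e k N).rank) : (K + e) * p ≤ (sylv e K N).rank := by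
  have hinj := sylv_vecMul_injective_of_le N hk hkK
    (vecMul_injective_iff_card_le_rank.2 (by simpa using h))
  simpa using vecMul_injective_iff_card_le_rank.1 hinj

end Sylvester

theorem hasFullSylvesterRank_of_le_rank {m n e k : ℕ}
    {N : Matrix (Fin m) (Fin (m + n)) F[X]} (hk : 0 < k) (hupper : m * e ≤ n * k)
    (hlower : n * (k - 1) ≤ m * e) (hrow : (k + e) * m ≤ (sylv e k N).rank)
    (hcol : (k - 1) * (m + n) ≤ (sylv e (k - 1) N).rank) : HasFullSylvesterRank e N := by
  intro j hj
  rcases le_or_gt k j with hkj | hjk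
  · have := Nat.mul_le_mul_left n hkj
    rw [min_eq_left (by nlinarith)]
    exact le_antisymm (by simpa using rank_le_card_height (sylv e j N))
      (height_le_rank_sylv_of_le N hk hkj hrow)
  · have := Nat.mul_le_mul_left n (by omega : j ≤ k - 1)
    rw [min_eq_right (by nlinarith)]
    exact le_antisymm (by simpa using rank_le_card_width (sylv e j N))
      (width_le_rank_sylv_of_le N (by omega) hcol)

section SpectralNorm

variable {a b : Type*} [Fintype a] [Fintype b] [DecidableEq b]

theorem norm_toEuclideanLin_apply_le (A : Matrix a b 𝕜) (x : EuclideanSpace 𝕜 b) :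
    ‖toEuclideanLin A x‖ ≤ sNorm A * ‖x‖ :=
  (LinearMap.toContinuousLinearMap (toEuclideanLin A)).le_opNorm x

theorem sNorm_le_of_forall_norm_le {A : Matrix a b 𝕜} {C : ℝ} (hC : 0 ≤ C)
    (h : ∀ x, ‖toEuclideanLin A x‖ ≤ C * ‖x‖) : sNorm A ≤ C :=
  ContinuousLinearMap.opNorm_le_bound _ hC h

theorem rank_eq_finrank_range_toEuclideanLin (A : Matrix a b 𝕜) :
    A.rank = Module.finrank 𝕜 (LinearMap.range (toEuclideanLin A)) := by
  rw [rank_eq_finrank_range_toLin A (PiLp.basisFun 2 𝕜 a) (PiLp.basisFun 2 𝕜 b)]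
  rfl

theorem le_rank_of_sNorm_sub_lt_singVal {A B : Matrix a b 𝕜} {j : ℕ}
    (h : sNorm (A - B) < singVal A j) : j ≤ B.rank := by
  obtain ⟨r, ⟨V, hVj, hV⟩, hr⟩ : ∃ r ∈ {r : ℝ | ∃ V : Submodule 𝕜 (EuclideanSpace 𝕜 b),
      Module.finrank 𝕜 V = j ∧ ∀ x ∈ V, r * ‖x‖ ≤ ‖toEuclideanLin A x‖},
      sNorm (A - B) < r := by
    by_contra! hle
    exact h.not_ge (Real.sSup_le hle (norm_nonneg _))
  have hinj : Injective ((toEuclideanLin B).domRestrict V) := by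
    refine (injective_iff_map_eq_zero _).2 fun ⟨x, hx⟩ hBx => Subtype.ext ?_
    have hAx : toEuclideanLin A x = toEuclideanLin (A - B) x := by
      rw [map_sub, LinearMap.sub_apply, show toEuclideanLin B x = 0 from hBx, sub_zero]
    have := (hV x hx).trans (hAx ▸ norm_toEuclideanLin_apply_le (A - B) x)
    exact norm_le_zero_iff.1 (by nlinarith [norm_nonneg x])
  calc j = Module.finrank 𝕜 (LinearMap.range ((toEuclideanLin B).domRestrict V)) := by
        rw [LinearMap.finrank_range_of_inj hinj, hVj]
    _ ≤ Module.finrank 𝕜 (LinearMap.range (toEuclideanLin B)) :=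
        Submodule.finrank_mono (LinearMap.range_domRestrict_le_range _ _)
    _ = B.rank := (rank_eq_finrank_range_toEuclideanLin B).symm

end SpectralNorm

theorem norm_toLp_extend_zero {α β : Type*} [Fintype α] [Fintype β] {f : α → β}
    (hf : Injective f) (v : α → 𝕜) :
    ‖(WithLp.toLp 2 (extend f v 0) : EuclideanSpace 𝕜 β)‖ =
      ‖(WithLp.toLp 2 v : EuclideanSpace 𝕜 α)‖ := by
  simp only [EuclideanSpace.norm_eq]
  congr 1
  refine (Fintype.sum_of_injective f hf _ _ (fun i hi => ?_) (fun c => ?_)).symm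
  · simp [extend_apply' _ _ _ hi]
  · simp [hf.extend_apply]

section Blocks

variable {ι : Type*} {k : ℕ}

theorem sum_extend_shiftBlock {R : Type*} [AddCommMonoid R] (x : Fin k × ι → R) :
    ∑ j : Fin k,
      extend (shiftBlock (a := 1) j j.isLt ι) (x ∘ shiftBlock (a := 1) j j.isLt ι) 0 = x := by
  funext ⟨j, c⟩
  rw [Finset.sum_apply, Finset.sum_eq_single j]
  · have hjc : (j, c) = shiftBlock (a := 1) j j.isLt ι (0, c) := Prod.ext (Fin.ext rfl) rfl
    rw [hjc, (shiftBlock_injective _ _ _).extend_apply]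
    rfl
  · rintro i - hij
    refine extend_apply' _ _ _ fun ⟨⟨o, c'⟩, h⟩ => hij (Fin.ext ?_)
    simp only [shiftBlock, Prod.mk.injEq, Fin.ext_iff] at h
    omega
  · exact (absurd (Finset.mem_univ j) ·)

theorem sum_norm_sq_comp_shiftBlock [Fintype ι] (x : Fin k × ι → 𝕜) :
    ∑ j : Fin k, ‖(WithLp.toLp 2 (x ∘ shiftBlock (a := 1) j j.isLt ι) :
        EuclideanSpace 𝕜 (Fin 1 × ι))‖ ^ 2 =
      ‖(WithLp.toLp 2 x : EuclideanSpace 𝕜 (Fin k × ι))‖ ^ 2 := by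
  simp only [EuclideanSpace.norm_sq_eq, Fintype.sum_prod_type, Fintype.sum_unique]
  rfl

end Blocks

theorem sylv_sub {p q e k : ℕ} (M M' : Matrix (Fin p) (Fin q) F[X]) :
    sylv e k (M - M') = sylv e k M - sylv e k M' := by
  ext r c
  simp only [sylv, Matrix.sub_apply, coeff_sub]
  split_ifs <;> simp

theorem sNorm_sylv_le {p q e k : ℕ} (Δ : Matrix (Fin p) (Fin q) 𝕜[X]) :
    sNorm (sylv e k Δ) ≤ √k * sNorm (sylv e 1 Δ) := by
  refine sNorm_le_of_forall_norm_le (mul_nonneg (Real.sqrt_nonneg _) (norm_nonneg _)) fun x => ?_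
  set S₁ := toEuclideanLin (sylv e 1 Δ)
  let xb (j : Fin k) : EuclideanSpace 𝕜 (Fin 1 × Fin q) :=
    WithLp.toLp 2 (x.ofLp ∘ shiftBlock (a := 1) j j.isLt _)
  have hrow (j : Fin k) : ↑j + (1 + e) ≤ k + e := by omega
  have hdecomp : toEuclideanLin (sylv e k Δ) x =
      ∑ j : Fin k, WithLp.toLp 2 (extend (shiftBlock j (hrow j) _) (S₁ (xb j)).ofLp 0) := by
    rw [toLpLin_apply, ← sum_extend_shiftBlock x.ofLp, mulVec_sum]
    simp only [sylv_mulVec_extend_shiftBlock, WithLp.toLp_sum]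
    rfl
  calc ‖toEuclideanLin (sylv e k Δ) x‖ ≤ ∑ j, ‖S₁ (xb j)‖ := by
        rw [hdecomp]
        refine (norm_sum_le _ _).trans_eq ?_
        simp only [norm_toLp_extend_zero (shiftBlock_injective _ _ _)]
    _ ≤ ∑ j, sNorm (sylv e 1 Δ) * ‖xb j‖ :=
        Finset.sum_le_sum fun j _ => norm_toEuclideanLin_apply_le _ _
    _ = sNorm (sylv e 1 Δ) * ∑ j, 1 * ‖xb j‖ := by simp [Finset.mul_sum]
    _ ≤ sNorm (sylv e 1 Δ) * (√k * ‖x‖) := by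
        gcongr
        · exact norm_nonneg _
        refine (Real.sum_mul_le_sqrt_mul_sqrt _ _ _).trans_eq ?_
        simp [xb, sum_norm_sq_comp_shiftBlock]
    _ = √k * sNorm (sylv e 1 Δ) * ‖x‖ := by ring

theorem le_rank_sylv_of_sNorm_lt {p q e k j : ℕ} {M M' : Matrix (Fin p) (Fin q) 𝕜[X]}
    (hk : 0 < k) (h : sNorm (sylv e 1 M - sylv e 1 M') < singVal (sylv e k M) j / √k) :
    j ≤ (sylv e k M').rank := by
  refine le_rank_of_sNorm_sub_lt_singVal (A := sylv e k M) ?_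
  calc sNorm (sylv e k M - sylv e k M') ≤ √k * sNorm (sylv e 1 M - sylv e 1 M') := by
        simpa only [sylv_sub] using sNorm_sylv_le (M - M')
    _ < singVal (sylv e k M) j := (lt_div_iff₀' (by positivity)).1 h

theorem natCeil_div_le_iff {a n c : ℕ} (hn : 0 < n) : ⌈(a : ℚ) / n⌉₊ ≤ c ↔ a ≤ n * c := by
  rw [Nat.ceil_le, div_le_iff₀ (by positivity), mul_comm]
  norm_cast

theorem robust_hasFullSylvesterRank_general {𝕜 : Type*} [RCLike 𝕜] {m n d : ℕ}
    (hm : 0 < m) (hn : 0 < n) (hd : 0 < d)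
    (M : Matrix (Fin m) (Fin (m + n)) 𝕜[X])
    (k' t : ℕ) (hk' : k' = ⌈(m * d : ℚ) / (n : ℚ)⌉₊) (ht : t = n * k' - m * d) :
    (1 < k' → 0 < t →
      ∀ M' : Matrix (Fin m) (Fin (m + n)) 𝕜[X], (∀ i j, (M' i j).natDegree ≤ d) →
        sNorm (sylv d 1 M - sylv d 1 M') <
          min (singVal (sylv d (k' - 1) M) ((k' - 1) * (m + n)) / Real.sqrt (k' - 1))
              (singVal (sylv d k' M) ((k' + d) * m) / Real.sqrt k') →
        HasFullSylvesterRank d M') ∧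
    (k' = 1 ∨ t = 0 →
      ∀ M' : Matrix (Fin m) (Fin (m + n)) 𝕜[X], (∀ i j, (M' i j).natDegree ≤ d) →
        sNorm (sylv d 1 M - sylv d 1 M') <
          singVal (sylv d k' M) ((k' + d) * m) / Real.sqrt k' →
        HasFullSylvesterRank d M') := by
  have hceil (c : ℕ) : k' ≤ c ↔ m * d ≤ n * c := by
    rw [hk', ← natCeil_div_le_iff hn]
    push_cast
    rfl
  have hk'pos : 0 < k' := Nat.pos_of_ne_zero fun h0 =>
    (Nat.mul_pos hm hd).not_ge (by simpa using (hceil 0).1 h0.le)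
  have hupper : m * d ≤ n * k' := (hceil k').1 le_rfl
  have hlower : n * (k' - 1) ≤ m * d := by
    by_contra! h
    have := (hceil _).2 h.le
    omega
  refine ⟨fun hk'1 _ M' _ hM' => ?_, fun hcase M' _ hM' => ?_⟩
  · rw [lt_min_iff, ← Nat.cast_pred hk'pos] at hM'
    exact hasFullSylvesterRank_of_le_rank hk'pos hupper hlower
      (le_rank_sylv_of_sNorm_lt hk'pos hM'.2) (le_rank_sylv_of_sNorm_lt (by omega) hM'.1)
  · have hrow := le_rank_sylv_of_sNorm_lt hk'pos hM'
    refine hasFullSylvesterRank_of_le_rank hk'pos hupper hlower hrow ?_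
    rcases hcase with rfl | ht0
    · simp
    · have hsquare : (k' + d) * m = k' * (m + n) := by
        have : m * d = n * k' := by omega
        rw [add_mul, mul_comm d m, this]
        ring
      exact width_le_rank_sylv_of_le M' (Nat.sub_le k' 1) (hsquare ▸ hrow)

/-- Robustness of full-Sylvester-rank matrices, with `k' = ⌈md/n⌉` and
`t = nk' - md`: (a) if `k' > 1` and `t > 0`, every `M̃` of degree at most `d` with
`‖S_1(M) - S_1(M̃)‖_2 < min{σ_{(k'-1)(m+n)}(S_{k'-1}(M))/√(k'-1),
σ_{(k'+d)m}(S_{k'}(M))/√k'}` has full-Sylvester-rank; (b) if `k' = 1` or `t = 0`,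
every `M̃` with `‖S_1(M) - S_1(M̃)‖_2 < σ_{(k'+d)m}(S_{k'}(M))/√k'` has
full-Sylvester-rank. -/
theorem robust_hasFullSylvesterRank {𝕜 : Type*} [RCLike 𝕜] {m n d : ℕ}
    (hm : 0 < m) (hn : 0 < n) (hd : 0 < d)
    (M : Matrix (Fin m) (Fin (m + n)) 𝕜[X]) (hdeg : ∀ i j, (M i j).natDegree ≤ d)
    (hfull : HasFullSylvesterRank d M)
    (k' t : ℕ) (hk' : k' = ⌈(m * d : ℚ) / (n : ℚ)⌉₊) (ht : t = n * k' - m * d) :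
    (1 < k' → 0 < t →
      ∀ M' : Matrix (Fin m) (Fin (m + n)) 𝕜[X], (∀ i j, (M' i j).natDegree ≤ d) →
        sNorm (sylv d 1 M - sylv d 1 M') <
          min (singVal (sylv d (k' - 1) M) ((k' - 1) * (m + n)) / Real.sqrt (k' - 1))
              (singVal (sylv d k' M) ((k' + d) * m) / Real.sqrt k') →
        HasFullSylvesterRank d M') ∧
    (k' = 1 ∨ t = 0 →
      ∀ M' : Matrix (Fin m) (Fin (m + n)) 𝕜[X], (∀ i j, (M' i j).natDegree ≤ d) →
        sNorm (sylv d 1 M - sylv d 1 M') <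
          singVal (sylv d k' M) ((k' + d) * m) / Real.sqrt k' →
        HasFullSylvesterRank d M') :=
  robust_hasFullSylvesterRank_general hm hn hd M k' t hk' ht
end
end
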